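/- arXiv:1808.10531 — 6 statements merged into one kernel-verified Lean document; each statement's English description precedes it below -/
import Mathlib

section
/- Let p be a prime, k ≥ 2 an integer, and f ∈ ℤ[x] not identically zero modulo p. Suppose ζ₀ ∈ {0,…,p−1} is a root of the mod-p reduction f̃ of finite multiplicity j ≥ 2, and suppose there exists ζ ∈ ℤ/(p^k) with ζ ≡ ζ₀ (mod p) and f(ζ) ≡ 0 (mod p^k). Then 2 ≤ s(f,ζ₀) ≤ j. -/
open Polynomial

/-- `s(f,ζ₀) = min_{i ≥ 0} (i + ord_p(f⁽ⁱ⁾(ζ₀)/i!))`, where `f⁽ⁱ⁾(ζ₀)/i!` is the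
coefficient of `x^i` in `f(ζ₀+x)`; the minimum ranges over `i` with nonzero coefficient. -/
noncomputable def sVal (p : ℕ) (f : Polynomial ℤ) (ζ₀ : ℤ) : ℕ :=
  sInf {n : ℕ | ∃ i : ℕ, (f.comp (X + C ζ₀)).coeff i ≠ 0 ∧
    n = i + padicValInt p ((f.comp (X + C ζ₀)).coeff i)}

/-- If `ζ₀` is a root of the mod-`p` reduction of `f` of multiplicity `j ≥ 2` and `ζ₀`
lifts to a root of `f` in `ℤ/(p^k)` with `k ≥ 2`, then `2 ≤ s(f,ζ₀) ≤ j`. -/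
theorem sVal_between_two_and_mult (p : ℕ) (hp : p.Prime) (k : ℕ) (hk : 2 ≤ k)
    (f : Polynomial ℤ) (hf : f.map (Int.castRingHom (ZMod p)) ≠ 0)
    (ζ₀ : ℤ) (hζ₀0 : 0 ≤ ζ₀) (hζ₀1 : ζ₀ < (p : ℤ))
    (j : ℕ) (hj : 2 ≤ j)
    (hmult : (f.map (Int.castRingHom (ZMod p))).rootMultiplicity ((ζ₀ : ZMod p)) = j)
    (ζ : ℤ) (hζ0 : 0 ≤ ζ) (hζ1 : ζ < (p : ℤ) ^ k)
    (hcong : (p : ℤ) ∣ (ζ - ζ₀)) (hζroot : (p : ℤ) ^ k ∣ f.eval ζ) :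
    2 ≤ sVal p f ζ₀ ∧ sVal p f ζ₀ ≤ j := by
  haveI : Fact p.Prime := ⟨hp⟩
  set g := f.comp (X + C ζ₀) with hgdef
  set φ := Int.castRingHom (ZMod p) with hφdef
  set F := f.map φ with hF
  set a : ZMod p := ((ζ₀ : ℤ) : ZMod p) with ha
  set w := F /ₘ (X - C a) ^ j with hw
  have hdecomp : (X - C a) ^ j * w = F := by
    rw [hw, ← hmult]; exact pow_mul_divByMonic_rootMultiplicity_eq F a
  have hweval : w.eval a ≠ 0 := by
    rw [hw, ← hmult]; exact eval_divByMonic_pow_rootMultiplicity_ne_zero a hf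
  have hXC : (X + C ζ₀).map φ = X + C a := by simp [ha]
  have hGmap : g.map φ = w.comp (X + C a) * X ^ j := by
    rw [hgdef, map_comp, hXC, ← hF, ← hdecomp, mul_comp, pow_comp, sub_comp, X_comp, C_comp]
    simp [mul_comm]
  have hcoeff : ∀ i, ((g.coeff i : ZMod p)) = (g.map φ).coeff i := by
    intro i; simp [coeff_map]
  -- coefficients of g.map φ
  have hcoeffG : ∀ i, (g.map φ).coeff i = if j ≤ i then (w.comp (X + C a)).coeff (i - j) else 0 := by
    intro i; rw [hGmap, coeff_mul_X_pow']
  have h0 : (p : ℤ) ∣ g.coeff 0 := by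
    rw [← ZMod.intCast_zmod_eq_zero_iff_dvd, hcoeff, hcoeffG]
    simp [Nat.not_le.mpr (by omega : 0 < j)]
  have h1 : (p : ℤ) ∣ g.coeff 1 := by
    rw [← ZMod.intCast_zmod_eq_zero_iff_dvd, hcoeff, hcoeffG]
    simp [Nat.not_le.mpr (by omega : 1 < j)]
  have hjc : ¬ (p : ℤ) ∣ g.coeff j := by
    rw [← ZMod.intCast_zmod_eq_zero_iff_dvd, hcoeff, hcoeffG]
    simp only [le_refl, if_true, Nat.sub_self]
    rw [coeff_zero_eq_eval_zero, eval_comp]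
    simpa using hweval
  have hjne : g.coeff j ≠ 0 := fun h => hjc (h ▸ dvd_zero _)
  -- p^2 divides g.coeff 0
  obtain ⟨t, ht⟩ := hcong
  have heval : g.eval (↑p * t) = f.eval ζ := by
    rw [hgdef, eval_comp]
    simp only [eval_add, eval_X, eval_C]
    rw [← ht]; ring_nf
  have hpk2 : (p : ℤ) ^ 2 ∣ f.eval ζ := dvd_trans (pow_dvd_pow _ hk) hζroot
  have h2 : (p : ℤ) ^ 2 ∣ g.coeff 0 := by
    have hsum : g.eval (↑p * t) =
        (∑ i ∈ Finset.range g.natDegree, g.coeff (i + 1) * (↑p * t) ^ (i + 1)) + g.coeff 0 := by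
      rw [eval_eq_sum_range, Finset.sum_range_succ']
      simp
    have hdvdsum : (p : ℤ) ^ 2 ∣
        ∑ i ∈ Finset.range g.natDegree, g.coeff (i + 1) * (↑p * t) ^ (i + 1) := by
      apply Finset.dvd_sum
      intro i _
      rcases Nat.eq_zero_or_pos i with rfl | hi
      · have : (p : ℤ) ^ 2 ∣ g.coeff 1 * (↑p * t) := by
          rw [pow_two]
          exact mul_dvd_mul h1 (dvd_mul_right _ _)
        simpa using this
      · have : (p : ℤ) ^ 2 ∣ (↑p * t) ^ (i + 1) := by
          calc (p : ℤ) ^ 2 ∣ (p : ℤ) ^ (i + 1) := pow_dvd_pow _ (by omega)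
          _ ∣ (↑p * t) ^ (i + 1) := pow_dvd_pow_of_dvd (dvd_mul_right _ _) _
        exact this.mul_left _
    have : g.coeff 0 = g.eval (↑p * t) -
        ∑ i ∈ Finset.range g.natDegree, g.coeff (i + 1) * (↑p * t) ^ (i + 1) := by
      rw [hsum]; ring
    rw [this, heval]
    exact dvd_sub hpk2 hdvdsum
  -- now conclude
  have hmem : j + padicValInt p (g.coeff j) ∈
      {n : ℕ | ∃ i : ℕ, g.coeff i ≠ 0 ∧ n = i + padicValInt p (g.coeff i)} :=
    ⟨j, hjne, rfl⟩
  constructor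
  · apply le_csInf ⟨_, hmem⟩
    rintro n ⟨i, hi, rfl⟩
    match i with
    | 0 =>
      have := (padicValInt_dvd_iff 2 (g.coeff 0)).mp h2
      omega
    | 1 =>
      have := (padicValInt_dvd_iff 1 (g.coeff 1)).mp (by simpa using h1)
      omega
    | (m + 2) => omega
  · have hv0 : padicValInt p (g.coeff j) = 0 := by
      by_contra h
      exact hjc (by simpa using (padicValInt_dvd_iff 1 (g.coeff j)).mpr (Or.inr (by omega)))
    calc sVal p f ζ₀ ≤ j + padicValInt p (g.coeff j) := Nat.sInf_le hmem
    _ = j := by simp [hv0]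
end

section
/- Let p be a prime, k ≥ 2 an integer, and f ∈ ℤ[x] not identically zero modulo p. Then N_{p,k}(f) = n_p(f) + Σ_{ζ₀ ∈ ℤ/(p), s(f,ζ₀) ≥ k} p^{k−1} + Σ_{ζ₀ ∈ ℤ/(p), s(f,ζ₀) ∈ {2,…,k−1}} p^{s(f,ζ₀)−1} · N_{p, k−s(f,ζ₀)}( f_{1,ζ₀} ), where the last two sums range over the roots ζ₀ of the mod-p reduction f̃ with s(f,ζ₀) in the indicated ranges. -/
open Polynomial

/-- `N_{p,k}(f)`: the number of residues `ζ ∈ ℤ/(p^k)` with `f(ζ) ≡ 0 (mod p^k)`. -/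
def Npk (p k : ℕ) (f : Polynomial ℤ) : ℕ :=
  ((Finset.range (p ^ k)).filter fun ζ : ℕ => (p : ℤ) ^ k ∣ f.eval (ζ : ℤ)).card

/-- Coefficientwise exact division of a polynomial by a constant. -/
noncomputable def divC (c : ℤ) (f : Polynomial ℤ) : Polynomial ℤ :=
  f.sum fun n a => C (a / c) * X ^ n

/-- `f_{1,ζ₀}(x) := f(ζ₀ + p·x) / p^{s(f,ζ₀)}`. -/
noncomputable def fOne (p : ℕ) (f : Polynomial ℤ) (ζ₀ : ℤ) : Polynomial ℤ :=
  divC ((p : ℤ) ^ sVal p f ζ₀) (f.comp (C (p : ℤ) * X + C ζ₀))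

/-!
A root of `f` modulo `p ^ k` reduces to a root `z` of `f` modulo `p` and is of the form `z + p t`.
Expanding at `z` gives `f (z + p t) = p ^ s * f₁ t` with `s = s(f, z)`: for `s ≥ k` every such `t`
gives a root, and for `2 ≤ s < k` the good `t` are the roots of `f₁` modulo `p ^ (k - s)`, each
repeated `p ^ (s - 1)` times. If `s ≤ 1` we argue at `z` directly: a non-degenerate root lifts
uniquely from each level to the next (Hensel), while a degenerate root with `s = 1` satisfies
`p ^ 2 ∤ f z` and `f (z + p t) ≡ f z [ZMOD p ^ 2]`, so it has no lifts at all.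
-/

open Finset

theorem sum_range_mul {M : Type*} [AddCommMonoid M] {n : ℕ} (m : ℕ) (hn : 0 < n) (g : ℕ → M) :
    ∑ x ∈ range (n * m), g x = ∑ z ∈ range n, ∑ t ∈ range m, g (z + n * t) := by
  rw [← sum_product']
  symm
  refine sum_nbij' (fun zt => zt.1 + n * zt.2) (fun x => (x % n, x / n)) ?_ ?_ ?_ ?_
    fun _ _ => rfl
  · simp only [mem_product, mem_range, Prod.forall, and_imp]
    intro z t hz ht
    nlinarith
  · simp only [mem_product, mem_range]
    intro x hx
    exact ⟨Nat.mod_lt x hn, Nat.div_lt_of_lt_mul hx⟩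
  · simp only [mem_product, mem_range, Prod.forall, Prod.mk.injEq, and_imp]
    intro z t hz _
    rw [Nat.add_mul_mod_self_left, Nat.mod_eq_of_lt hz, Nat.add_mul_div_left _ _ hn,
      Nat.div_eq_of_lt hz, zero_add]
    exact ⟨rfl, rfl⟩
  · intro x _
    exact Nat.mod_add_div x n

theorem card_filter_range_mul {n : ℕ} (m : ℕ) (hn : 0 < n) (Q : ℕ → Prop) [DecidablePred Q] :
    #{x ∈ range (n * m) | Q x} = ∑ z ∈ range n, #{t ∈ range m | Q (z + n * t)} := by
  simp only [card_filter, sum_range_mul m hn]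

theorem card_filter_range_mul_of_periodic {n : ℕ} (m : ℕ) (hn : 0 < n) (Q : ℕ → Prop)
    [DecidablePred Q] (hQ : ∀ z t, Q (z + n * t) ↔ Q z) :
    #{x ∈ range (n * m) | Q x} = m * #{z ∈ range n | Q z} := by
  rw [card_filter_range_mul m hn, card_filter, mul_sum]
  refine sum_congr rfl fun z _ => ?_
  by_cases hz : Q z <;> simp [hQ, hz]

theorem card_filter_range_dvd_add_mul {p : ℕ} (hp : p.Prime) {a b : ℤ} (hb : ¬ (p : ℤ) ∣ b) :
    #{u ∈ range p | (p : ℤ) ∣ a + ((u : ℕ) : ℤ) * b} = 1 := by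
  have := Fact.mk hp
  have hb' : (b : ZMod p) ≠ 0 := by rwa [Ne, ZMod.intCast_zmod_eq_zero_iff_dvd]
  rw [card_eq_one]
  refine ⟨(-a * (b : ZMod p)⁻¹ : ZMod p).val, ?_⟩
  ext u
  simp only [mem_filter, mem_range, mem_singleton, ← ZMod.intCast_zmod_eq_zero_iff_dvd]
  push_cast
  constructor
  · rintro ⟨hu, h⟩
    rw [← ZMod.val_natCast_of_lt hu]
    congr 1
    field_simp
    linear_combination h
  · rintro rfl
    refine ⟨ZMod.val_lt _, ?_⟩
    rw [ZMod.natCast_zmod_val]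
    field_simp
    ring

theorem dvd_eval_add_mul_iff {R : Type*} [CommRing R] (g : R[X]) (c x t : R) :
    c ∣ g.eval (x + c * t) ↔ c ∣ g.eval x :=
  dvd_iff_dvd_of_dvd_sub <|
    (dvd_mul_right c t).trans (by simpa using sub_dvd_eval_sub (x + c * t) x g)

theorem coeff_divC (c : ℤ) (g : ℤ[X]) (n : ℕ) : (divC c g).coeff n = g.coeff n / c := by
  rw [divC, Polynomial.sum, finsetSum_coeff]
  simp only [coeff_C_mul, coeff_X_pow, mul_ite, mul_one, mul_zero, sum_ite_eq]
  split_ifs with h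
  · rfl
  · rw [notMem_support_iff.1 h, Int.zero_ediv]

theorem C_mul_divC {c : ℤ} {g : ℤ[X]} (h : ∀ n, c ∣ g.coeff n) : C c * divC c g = g := by
  ext n
  rw [coeff_C_mul, coeff_divC, Int.mul_ediv_cancel' (h n)]

section sVal

variable {p : ℕ} {f : ℤ[X]} {z : ℤ}

theorem pow_sub_dvd_coeff_of_le_sVal {n : ℕ} (h : n ≤ sVal p f z) (i : ℕ) :
    (p : ℤ) ^ (n - i) ∣ (taylor z f).coeff i := by
  rw [taylor_apply]
  by_cases hi : (f.comp (X + C z)).coeff i = 0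
  · rw [hi]
    exact dvd_zero _
  have : sVal p f z ≤ i + padicValInt p ((f.comp (X + C z)).coeff i) := Nat.sInf_le ⟨i, hi, rfl⟩
  exact (pow_dvd_pow _ (by omega)).trans (padicValInt_dvd _)

theorem le_sVal_iff (hp : p ≠ 1) (hf : f ≠ 0) {n : ℕ} :
    n ≤ sVal p f z ↔ ∀ i, (p : ℤ) ^ (n - i) ∣ (taylor z f).coeff i := by
  refine ⟨pow_sub_dvd_coeff_of_le_sVal, fun h => ?_⟩
  simp only [taylor_apply] at h
  have hg : f.comp (X + C z) ≠ 0 := by rwa [← taylor_apply, Ne, taylor_eq_zero]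
  obtain ⟨i, hi, hs⟩ : sVal p f z ∈ {n : ℕ | ∃ i : ℕ, (f.comp (X + C z)).coeff i ≠ 0 ∧
      n = i + padicValInt p ((f.comp (X + C z)).coeff i)} :=
    Nat.sInf_mem ⟨_, _, leadingCoeff_ne_zero.mpr hg, rfl⟩
  have := ((padicValInt_dvd_iff_of_ne_one hp _ _).1 (h i)).resolve_left hi
  omega

theorem two_le_sVal_iff (hp : p ≠ 1) (hf : f ≠ 0) :
    2 ≤ sVal p f z ↔ (p : ℤ) ^ 2 ∣ f.eval z ∧ (p : ℤ) ∣ f.derivative.eval z := by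
  rw [le_sVal_iff hp hf]
  refine ⟨fun h => ⟨?_, ?_⟩, fun ⟨h0, h1⟩ i => ?_⟩
  · simpa [taylor_coeff_zero] using h 0
  · simpa [taylor_coeff_one] using h 1
  · match i with
    | 0 => simpa [taylor_coeff_zero] using h0
    | 1 => simpa [taylor_coeff_one] using h1
    | i + 2 => simp

theorem pow_sVal_dvd_coeff_comp (i : ℕ) :
    (p : ℤ) ^ sVal p f z ∣ (f.comp (C (p : ℤ) * X + C z)).coeff i := by
  rw [show C (p : ℤ) * X + C z = (X + C z).comp (C (p : ℤ) * X) by simp, ← comp_assoc,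
    comp_C_mul_X_coeff, ← taylor_apply]
  refine (pow_dvd_pow _ (by omega : sVal p f z ≤ sVal p f z - i + i)).trans ?_
  rw [pow_add]
  exact mul_dvd_mul (pow_sub_dvd_coeff_of_le_sVal le_rfl i) dvd_rfl

theorem eval_add_mul_eq_pow_sVal_mul_eval_fOne (t : ℤ) :
    f.eval (z + p * t) = (p : ℤ) ^ sVal p f z * (fOne p f z).eval t := by
  have h := congrArg (eval t) (C_mul_divC (pow_sVal_dvd_coeff_comp (p := p) (f := f) (z := z)))
  simp only [eval_mul, eval_C, eval_comp, eval_add, eval_X] at h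
  rw [fOne, h, add_comm]

end sVal

theorem card_filter_range_dvd_eval_add_pow_mul {p : ℕ} (hp : p.Prime) {j : ℕ} (hj : 1 ≤ j)
    (f : ℤ[X]) {x : ℤ} (hx : ¬ (p : ℤ) ∣ f.derivative.eval x) :
    #{u ∈ range p | (p : ℤ) ^ (j + 1) ∣ f.eval (x + p ^ j * ((u : ℕ) : ℤ))} =
      if (p : ℤ) ^ j ∣ f.eval x then 1 else 0 := by
  obtain ⟨i, rfl⟩ := Nat.exists_eq_add_of_le' hj
  have taylor_mod (u : ℤ) : (p : ℤ) ^ (i + 2) ∣ f.eval (x + p ^ (i + 1) * u) ↔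
      (p : ℤ) ^ (i + 2) ∣ f.eval x + f.derivative.eval x * (p ^ (i + 1) * u) := by
    obtain ⟨E, hE⟩ := f.binomExpansion x (p ^ (i + 1) * u)
    rw [hE, dvd_add_left ⟨p ^ i * u ^ 2 * E, by ring⟩]
  split_ifs with hdvd
  · obtain ⟨a, ha⟩ := hdvd
    have linear (u : ℤ) : f.eval x + f.derivative.eval x * (p ^ (i + 1) * u) =
        p ^ (i + 1) * (a + u * f.derivative.eval x) := by
      rw [ha]; ring
    simp_rw [taylor_mod, linear, pow_succ _ (i + 1),
      mul_dvd_mul_iff_left (pow_ne_zero _ (Int.natCast_ne_zero.2 hp.ne_zero))]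
    exact card_filter_range_dvd_add_mul hp hx
  · rw [card_eq_zero, filter_eq_empty_iff]
    intro u _ hu
    rw [taylor_mod] at hu
    exact hdvd ((dvd_add_left (dvd_mul_of_dvd_right (dvd_mul_right _ _) _)).1
      ((pow_dvd_pow _ (by omega)).trans hu))

/-- The number of roots of `f` modulo `p ^ (j + 1)` that are congruent to `z` modulo `p`. -/
def liftCount (p j : ℕ) (f : ℤ[X]) (z : ℤ) : ℕ :=
  #{t ∈ range (p ^ j) | (p : ℤ) ^ (j + 1) ∣ f.eval (z + p * ((t : ℕ) : ℤ))}

theorem Npk_succ_eq_sum_liftCount {p : ℕ} (hp : 0 < p) (j : ℕ) (f : ℤ[X]) :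
    Npk p (j + 1) f = ∑ z ∈ range p, liftCount p j f z := by
  rw [Npk, show p ^ (j + 1) = p * p ^ j from pow_succ' p j, card_filter_range_mul _ hp]
  simp only [liftCount, Nat.cast_add, Nat.cast_mul]

section liftCount

variable {p j : ℕ} {f : ℤ[X]} {z : ℤ}

theorem liftCount_eq_zero_of_not_dvd (hz : ¬ (p : ℤ) ∣ f.eval z) : liftCount p j f z = 0 := by
  rw [liftCount, card_eq_zero, filter_eq_empty_iff]
  intro t _ ht
  exact hz ((dvd_eval_add_mul_iff f _ z t).1 ((dvd_pow_self _ j.succ_ne_zero).trans ht))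

theorem liftCount_eq_zero_of_not_sq_dvd (hj : 1 ≤ j) (hz : ¬ (p : ℤ) ^ 2 ∣ f.eval z)
    (hz' : (p : ℤ) ∣ f.derivative.eval z) : liftCount p j f z = 0 := by
  rw [liftCount, card_eq_zero, filter_eq_empty_iff]
  intro t _ ht
  obtain ⟨E, hE⟩ := f.binomExpansion z (p * t)
  obtain ⟨c, hc⟩ := hz'
  have hsq : (p : ℤ) ^ 2 ∣ f.eval z + (f.derivative.eval z * (p * t) + E * (p * t) ^ 2) := by
    rw [← add_assoc, ← hE]
    exact (pow_dvd_pow _ (by omega)).trans ht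
  exact hz ((dvd_add_left ⟨c * t + E * t ^ 2, by rw [hc]; ring⟩).1 hsq)

theorem liftCount_succ (hp : p.Prime) (hz' : ¬ (p : ℤ) ∣ f.derivative.eval z) :
    liftCount p (j + 1) f z = liftCount p j f z := by
  rw [liftCount, show p ^ (j + 1) = p ^ j * p from pow_succ p j,
    card_filter_range_mul _ (pow_pos hp.pos j), liftCount, card_filter]
  refine sum_congr rfl fun r _ => ?_
  have hr : ¬ (p : ℤ) ∣ f.derivative.eval (z + p * r) := by rwa [dvd_eval_add_mul_iff]
  have h := card_filter_range_dvd_eval_add_pow_mul hp (Nat.le_add_left 1 j) f hr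
  push_cast
  simp_rw [← h, show ∀ u : ℕ, z + p * (r + p ^ j * u : ℤ) = z + p * r + p ^ (j + 1) * u by
    intro u; ring]

theorem liftCount_of_not_dvd_derivative (hp : p.Prime)
    (hz' : ¬ (p : ℤ) ∣ f.derivative.eval z) :
    liftCount p j f z = if (p : ℤ) ∣ f.eval z then 1 else 0 := by
  induction j with
  | zero => simp [liftCount, filter_singleton, apply_ite card]
  | succ j ih => rw [liftCount_succ hp hz', ih]

theorem liftCount_of_le_sVal (h : j + 1 ≤ sVal p f z) : liftCount p j f z = p ^ j := by
  rw [liftCount, filter_true_of_mem, card_range]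
  intro t _
  rw [eval_add_mul_eq_pow_sVal_mul_eval_fOne]
  exact (pow_dvd_pow _ h).mul_right _

theorem liftCount_eq_mul_Npk_fOne (hp : 0 < p) (h₁ : 1 ≤ sVal p f z) (h₂ : sVal p f z ≤ j + 1) :
    liftCount p j f z = p ^ (sVal p f z - 1) * Npk p (j + 1 - sVal p f z) (fOne p f z) := by
  set s := sVal p f z
  have hcancel (t : ℕ) : (p : ℤ) ^ (j + 1) ∣ f.eval (z + p * t) ↔
      (p : ℤ) ^ (j + 1 - s) ∣ (fOne p f z).eval (t : ℤ) := by
    rw [eval_add_mul_eq_pow_sVal_mul_eval_fOne, ← Nat.add_sub_cancel' h₂, pow_add,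
      Nat.add_sub_cancel_left, mul_dvd_mul_iff_left (pow_ne_zero _ (by exact_mod_cast hp.ne'))]
  rw [liftCount, filter_congr fun t _ => hcancel t,
    show p ^ j = p ^ (j + 1 - s) * p ^ (s - 1) by rw [← pow_add]; congr 1; omega,
    card_filter_range_mul_of_periodic _ (pow_pos hp _), Npk]
  intro r t
  push_cast
  exact dvd_eval_add_mul_iff _ _ _ _

end liftCount

theorem liftCount_eq {p j : ℕ} (hp : p.Prime) (hj : 1 ≤ j) {f : ℤ[X]} (hf : f ≠ 0) (z : ℤ) :
    liftCount p j f z =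
      (if (p : ℤ) ∣ f.eval z ∧ ¬ (p : ℤ) ∣ f.derivative.eval z then 1 else 0)
      + (if (p : ℤ) ∣ f.eval z ∧ j + 1 ≤ sVal p f z then p ^ j else 0)
      + (if (p : ℤ) ∣ f.eval z ∧ 2 ≤ sVal p f z ∧ sVal p f z ≤ j then
          p ^ (sVal p f z - 1) * Npk p (j + 1 - sVal p f z) (fOne p f z) else 0) := by
  have two_le_iff := two_le_sVal_iff (z := z) hp.ne_one hf
  by_cases hz : (p : ℤ) ∣ f.eval z
  swap
  · simp [hz, liftCount_eq_zero_of_not_dvd hz]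
  by_cases hz' : (p : ℤ) ∣ f.derivative.eval z
  swap
  · have : sVal p f z < 2 := by rw [← not_le, two_le_iff]; tauto
    rw [liftCount_of_not_dvd_derivative hp hz', if_pos hz, if_pos ⟨hz, hz'⟩,
      if_neg (by omega), if_neg (by omega)]
  by_cases hz2 : (p : ℤ) ^ 2 ∣ f.eval z
  swap
  · have : sVal p f z < 2 := by rw [← not_le, two_le_iff]; tauto
    rw [liftCount_eq_zero_of_not_sq_dvd hj hz2 hz', if_neg (by tauto),
      if_neg (by omega), if_neg (by omega)]
  have hs : 2 ≤ sVal p f z := two_le_iff.2 ⟨hz2, hz'⟩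
  rw [if_neg (by tauto)]
  rcases le_or_gt (j + 1) (sVal p f z) with hjs | hsj
  · rw [liftCount_of_le_sVal hjs, if_pos ⟨hz, hjs⟩, if_neg (by omega), zero_add, add_zero]
  · rw [liftCount_eq_mul_Npk_fOne hp.pos (by omega) hsj.le, if_neg (by omega),
      if_pos ⟨hz, hs, by omega⟩, zero_add, zero_add]

/-- The root-counting recursion: `N_{p,k}(f)` equals the number of non-degenerate roots
of the mod-`p` reduction of `f`, plus `p^{k-1}` for each root `ζ₀` with `s(f,ζ₀) ≥ k`,
plus `p^{s(f,ζ₀)-1}·N_{p,k-s(f,ζ₀)}(f_{1,ζ₀})` for each root with `2 ≤ s(f,ζ₀) ≤ k-1`. -/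
theorem Npk_recursion (p : ℕ) (hp : p.Prime) (k : ℕ) (hk : 2 ≤ k)
    (f : Polynomial ℤ) (hf : f.map (Int.castRingHom (ZMod p)) ≠ 0) :
    Npk p k f =
      ((Finset.range p).filter fun z : ℕ =>
          (p : ℤ) ∣ f.eval (z : ℤ) ∧ ¬ (p : ℤ) ∣ f.derivative.eval (z : ℤ)).card
      + (∑ z ∈ (Finset.range p).filter
            (fun z : ℕ => (p : ℤ) ∣ f.eval (z : ℤ) ∧ k ≤ sVal p f (z : ℤ)),
          p ^ (k - 1))
      + ∑ z ∈ (Finset.range p).filter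
            (fun z : ℕ => (p : ℤ) ∣ f.eval (z : ℤ) ∧
              2 ≤ sVal p f (z : ℤ) ∧ sVal p f (z : ℤ) ≤ k - 1),
          p ^ (sVal p f (z : ℤ) - 1) * Npk p (k - sVal p f (z : ℤ)) (fOne p f (z : ℤ)) := by
  obtain ⟨j, rfl⟩ : ∃ j, k = j + 1 := ⟨k - 1, by omega⟩
  have hf0 : f ≠ 0 := by
    rintro rfl
    exact hf (Polynomial.map_zero _)
  rw [Npk_succ_eq_sum_liftCount hp.pos, card_filter, sum_filter, sum_filter,
    ← sum_add_distrib, ← sum_add_distrib, Nat.add_sub_cancel]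
  exact sum_congr rfl fun z _ => liftCount_eq hp (by omega) hf0 z
end

section
/- Let p be a prime and f ∈ ℤ[x] not identically zero modulo p. If ζ₀ ∈ {0,…,p−1} is a root of the mod-p reduction f̃ of finite multiplicity j ≥ 1, then s(f,ζ₀) ≤ j. -/
open Polynomial

/-- If `ζ₀` is a root of the mod-`p` reduction of `f` of multiplicity `j ≥ 1`,
then `s(f,ζ₀) ≤ j`. -/
theorem sVal_le_mult (p : ℕ) (hp : p.Prime)
    (f : Polynomial ℤ) (hf : f.map (Int.castRingHom (ZMod p)) ≠ 0)
    (ζ₀ : ℤ) (hζ₀0 : 0 ≤ ζ₀) (hζ₀1 : ζ₀ < (p : ℤ))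
    (j : ℕ) (hj : 1 ≤ j)
    (hmult : (f.map (Int.castRingHom (ZMod p))).rootMultiplicity ((ζ₀ : ZMod p)) = j) :
    sVal p f ζ₀ ≤ j := by
  set φ := Int.castRingHom (ZMod p)
  set g := f.comp (X + C ζ₀) with hg
  have hmap : g.map φ = (f.map φ).comp (X + C ((ζ₀ : ZMod p))) := by
    simp [hg, Polynomial.map_comp, φ]
  have hne : g.map φ ≠ 0 := by
    rw [hmap]
    intro h
    exact hf (comp_X_add_C_eq_zero_iff.mp h)
  have hdeg : (g.map φ).natTrailingDegree = j := by
    rw [hmap, ← rootMultiplicity_eq_natTrailingDegree, hmult]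
  have hcoeff : (g.map φ).coeff j ≠ 0 := by
    rw [← hdeg]
    exact coeff_natTrailingDegree_ne_zero.mpr hne
  rw [coeff_map] at hcoeff
  have hndvd : ¬ (p : ℤ) ∣ g.coeff j := by
    intro h
    exact hcoeff ((ZMod.intCast_zmod_eq_zero_iff_dvd _ p).mpr h)
  have hne' : g.coeff j ≠ 0 := by
    rintro h; exact hndvd (h ▸ dvd_zero _)
  have hval : padicValInt p (g.coeff j) = 0 := padicValInt.eq_zero_of_not_dvd hndvd
  have : j ∈ {n : ℕ | ∃ i : ℕ, (f.comp (X + C ζ₀)).coeff i ≠ 0 ∧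
      n = i + padicValInt p ((f.comp (X + C ζ₀)).coeff i)} := ⟨j, hne', by rw [← hg, hval]; ring⟩
  exact Nat.sInf_le this
end

section
/- Let p be a prime, k ≥ 2 an integer, and f ∈ ℤ[x] not identically zero modulo p. If ζ₀ ∈ {0,…,p−1} is a root of the mod-p reduction f̃ with s(f,ζ₀) ≥ k, then the number of ζ ∈ ℤ/(p^k) with ζ ≡ ζ₀ (mod p) and f(ζ) ≡ 0 (mod p^k) is exactly p^{k−1}. -/
open Polynomial

/-- If `ζ₀` is a root of the mod-`p` reduction of `f` with `s(f,ζ₀) ≥ k`, then `ζ₀` has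
exactly `p^{k-1}` lifts to roots of `f` in `ℤ/(p^k)`. -/
theorem lifts_card_of_sVal_ge (p : ℕ) (hp : p.Prime) (k : ℕ) (hk : 2 ≤ k)
    (f : Polynomial ℤ) (hf : f.map (Int.castRingHom (ZMod p)) ≠ 0)
    (ζ₀ : ℤ) (hζ₀0 : 0 ≤ ζ₀) (hζ₀1 : ζ₀ < (p : ℤ))
    (hroot : (p : ℤ) ∣ f.eval ζ₀) (hs : k ≤ sVal p f ζ₀) :
    ((Finset.range (p ^ k)).filter fun ζ : ℕ =>
        (p : ℤ) ∣ ((ζ : ℤ) - ζ₀) ∧ (p : ℤ) ^ k ∣ f.eval (ζ : ℤ)).card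
      = p ^ (k - 1) := by
  haveI : Fact p.Prime := ⟨hp⟩
  have hp1 : 1 < p := hp.one_lt
  set g := f.comp (X + C ζ₀) with hg
  -- each shifted coefficient times p^i is divisible by p^k
  have hcoeff : ∀ i : ℕ, (p : ℤ) ^ k ∣ g.coeff i * (p : ℤ) ^ i := by
    intro i
    by_cases hc : g.coeff i = 0
    · simp [hc]
    · have hmem : i + padicValInt p (g.coeff i) ∈
          {n : ℕ | ∃ i : ℕ, (f.comp (X + C ζ₀)).coeff i ≠ 0 ∧
            n = i + padicValInt p ((f.comp (X + C ζ₀)).coeff i)} := ⟨i, hc, rfl⟩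
      have hk' : k ≤ i + padicValInt p (g.coeff i) := le_trans hs (Nat.sInf_le hmem)
      calc (p : ℤ) ^ k ∣ (p : ℤ) ^ (padicValInt p (g.coeff i)) * (p : ℤ) ^ i := by
            rw [← pow_add]; exact pow_dvd_pow _ (by omega)
        _ ∣ g.coeff i * (p : ℤ) ^ i := mul_dvd_mul (padicValInt_dvd _) dvd_rfl
  -- every lift is a root mod p^k
  have heval : ∀ ζ : ℤ, (p : ℤ) ∣ ζ - ζ₀ → (p : ℤ) ^ k ∣ f.eval ζ := by
    intro ζ hdiv
    obtain ⟨t, ht⟩ := hdiv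
    have hfe : f.eval ζ = g.eval (ζ - ζ₀) := by
      rw [hg, eval_comp]; simp
    rw [hfe, Polynomial.eval_eq_sum_range]
    refine Finset.dvd_sum fun i _ => ?_
    rw [ht, mul_pow, ← mul_assoc]
    exact (hcoeff i).mul_right _
  -- the filter reduces to the congruence condition
  have hfilter : ((Finset.range (p ^ k)).filter fun ζ : ℕ =>
        (p : ℤ) ∣ ((ζ : ℤ) - ζ₀) ∧ (p : ℤ) ^ k ∣ f.eval (ζ : ℤ))
      = (Finset.range (p ^ k)).filter fun ζ : ℕ => (p : ℤ) ∣ ((ζ : ℤ) - ζ₀) := by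
    apply Finset.filter_congr
    intro ζ _
    exact ⟨fun h => h.1, fun h => ⟨h, heval _ h⟩⟩
  rw [hfilter]
  -- count the residues
  set ζn := ζ₀.toNat with hζn
  have hζn' : (ζn : ℤ) = ζ₀ := Int.toNat_of_nonneg hζ₀0
  have hζnp : ζn < p := by omega
  have himg : ((Finset.range (p ^ k)).filter fun ζ : ℕ => (p : ℤ) ∣ ((ζ : ℤ) - ζ₀))
      = (Finset.range (p ^ (k - 1))).image fun j => ζn + p * j := by
    ext ζ
    simp only [Finset.mem_filter, Finset.mem_range, Finset.mem_image]
    constructor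
    · rintro ⟨hlt, t, ht⟩
      have ht0 : 0 ≤ t := by nlinarith [hζn', (by exact_mod_cast Nat.zero_le ζ : (0:ℤ) ≤ (ζ:ℤ))]
      refine ⟨t.toNat, ?_, ?_⟩
      · have hpk : (p : ℤ) ^ k = (p : ℤ) * (p : ℤ) ^ (k - 1) := by
          rw [← pow_succ']; congr 1; omega
        have hζlt : (ζ : ℤ) < (p : ℤ) ^ k := by exact_mod_cast hlt
        have : (p : ℤ) * t < (p : ℤ) * (p : ℤ) ^ (k - 1) := by
          rw [← hpk]; omega
        have htlt : t < (p : ℤ) ^ (k - 1) := lt_of_mul_lt_mul_left this (by positivity)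
        have : (t.toNat : ℤ) < ((p ^ (k - 1) : ℕ) : ℤ) := by
          push_cast; omega
        exact_mod_cast this
      · have : (↑(ζn + p * t.toNat) : ℤ) = (ζ : ℤ) := by
          push_cast; rw [hζn', Int.toNat_of_nonneg ht0]; omega
        exact_mod_cast this
    · rintro ⟨j, hj, rfl⟩
      constructor
      · calc ζn + p * j < p * (j + 1) := by rw [Nat.mul_succ]; omega
          _ ≤ p * p ^ (k - 1) := by
            exact Nat.mul_le_mul_left _ (by omega)
          _ = p ^ k := by rw [← pow_succ']; congr 1; omega
      · exact ⟨j, by push_cast [hζn']; ring⟩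
  rw [himg, Finset.card_image_of_injective _ (fun a b h =>
    Nat.eq_of_mul_eq_mul_left (by omega) (Nat.add_left_cancel h)), Finset.card_range]
end

section
/- Let p be a prime, f ∈ ℤ[x] not identically zero modulo p, ζ₀ ∈ ℤ, and set s := s(f,ζ₀) and f_{1,ζ₀}(X) := f(ζ₀ + pX)/p^s ∈ ℤ[X]. Then the degree of the mod-p reduction of f_{1,ζ₀} is at most s; equivalently, for every ℓ ≥ s+1, p^{s+1} divides the coefficient of X^ℓ in f(ζ₀ + pX). -/
open Polynomial

lemma coeff_comp_C_mul_X (h : Polynomial ℤ) (c : ℤ) (ℓ : ℕ) :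
    (h.comp (C c * X)).coeff ℓ = c ^ ℓ * h.coeff ℓ := by
  induction h using Polynomial.induction_on' with
  | add p q hp hq => rw [add_comp, coeff_add, hp, hq, coeff_add, mul_add]
  | monomial n a =>
    have : (monomial n a).comp (C c * X) = monomial n (a * c ^ n) := by
      rw [monomial_comp, mul_pow, ← C_pow, ← C_mul_X_pow_eq_monomial, C_mul]
      ring
    rw [this, coeff_monomial, coeff_monomial]
    split
    · rename_i h; subst h; ring
    · ring

lemma divC_coeff (c : ℤ) (f : Polynomial ℤ) (n : ℕ) :
    (divC c f).coeff n = f.coeff n / c := by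
  rw [divC, Polynomial.coeff_sum]
  simp only [coeff_C_mul, coeff_X_pow, mul_ite, mul_one, mul_zero]
  rw [Polynomial.sum_def, Finset.sum_ite_eq f.support n (fun k => f.coeff k / c)]
  split
  · rfl
  · rw [Polynomial.notMem_support_iff.mp ‹_›, Int.zero_ediv]

lemma key (p : ℕ) (f : Polynomial ℤ) (ζ₀ : ℤ) (ℓ : ℕ) :
    (f.comp (C (p : ℤ) * X + C ζ₀)).coeff ℓ = (p : ℤ) ^ ℓ * (f.comp (X + C ζ₀)).coeff ℓ := by
  have : f.comp (C (p : ℤ) * X + C ζ₀) = (f.comp (X + C ζ₀)).comp (C (p : ℤ) * X) := by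
    rw [comp_assoc, add_comp, X_comp, C_comp]
  rw [this, coeff_comp_C_mul_X]

/-- The mod-`p` reduction of `f_{1,ζ₀}` has degree at most `s := s(f,ζ₀)`; equivalently,
for every `ℓ ≥ s+1`, `p^{s+1}` divides the coefficient of `X^ℓ` in `f(ζ₀ + pX)`. -/
theorem fOne_reduction_degree_le (p : ℕ) (hp : p.Prime)
    (f : Polynomial ℤ) (hf : f.map (Int.castRingHom (ZMod p)) ≠ 0) (ζ₀ : ℤ) :
    ((fOne p f ζ₀).map (Int.castRingHom (ZMod p))).degree ≤ (sVal p f ζ₀ : WithBot ℕ) ∧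
    ∀ ℓ : ℕ, sVal p f ζ₀ + 1 ≤ ℓ →
      (p : ℤ) ^ (sVal p f ζ₀ + 1) ∣ (f.comp (C (p : ℤ) * X + C ζ₀)).coeff ℓ := by
  set s := sVal p f ζ₀ with hs
  have hpow : ∀ ℓ : ℕ, s + 1 ≤ ℓ →
      (p : ℤ) ^ (s + 1) ∣ (f.comp (C (p : ℤ) * X + C ζ₀)).coeff ℓ := by
    intro ℓ hℓ
    rw [key]
    exact dvd_mul_of_dvd_left (pow_dvd_pow _ hℓ) _
  refine ⟨?_, hpow⟩
  rw [Polynomial.degree_le_iff_coeff_zero]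
  intro m hm
  have hm' : s + 1 ≤ m := by exact_mod_cast Nat.add_one_le_iff.mpr (by exact_mod_cast hm)
  rw [Polynomial.coeff_map, fOne, divC_coeff]
  obtain ⟨k, hk⟩ := hpow m hm'
  rw [hk, pow_succ, mul_assoc, Int.mul_ediv_cancel_left _ (pow_ne_zero _ (by exact_mod_cast hp.ne_zero))]
  simp [ZMod.intCast_zmod_eq_zero_iff_dvd]
end

section
/- Let p be a prime and f ∈ ℤ[x] not identically zero modulo p. Then the sum of s(f,ζ₀) over all degenerate roots ζ₀ ∈ {0,…,p−1} of the mod-p reduction f̃ (roots with f′(ζ₀) ≡ 0 (mod p)) is at most deg f̃. -/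
open Polynomial

/-!
The coefficient of `x^m` in `f(ζ₀ + x)`, where `m` is the multiplicity of `ζ₀` as a root of `f̃`,
reduces to the trailing coefficient of `f̃(ζ₀ + x)` and so is prime to `p`; the index `i = m`
gives `s(f, ζ₀) ≤ m`. The residues `0, …, p - 1` are distinct in `ℤ/(p)`, so these multiplicities
add up to at most `deg f̃`.
-/

theorem Polynomial.sum_rootMultiplicity_le_natDegree {R : Type*} [CommRing R] [IsDomain R]
    (F : R[X]) (T : Finset R) : ∑ x ∈ T, F.rootMultiplicity x ≤ F.natDegree := by
  classical
  calc ∑ x ∈ T, F.rootMultiplicity x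
      = ∑ x ∈ T, F.roots.count x := by simp only [count_roots]
    _ ≤ ∑ x ∈ T ∪ F.roots.toFinset, F.roots.count x :=
        Finset.sum_le_sum_of_subset Finset.subset_union_left
    _ = Multiset.card F.roots :=
        Multiset.sum_count_eq_card fun _ h => Finset.mem_union_right _ (Multiset.mem_toFinset.2 h)
    _ ≤ F.natDegree := F.card_roots'

theorem Polynomial.map_comp_X_add_C {R S : Type*} [CommSemiring R] [CommSemiring S]
    (φ : R →+* S) (f : R[X]) (a : R) :
    (f.comp (X + C a)).map φ = (f.map φ).comp (X + C (φ a)) := by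
  simp [Polynomial.map_comp]

theorem sVal_le_of_not_dvd_coeff {p : ℕ} {f : ℤ[X]} {ζ₀ : ℤ} {i : ℕ}
    (hi : ¬ (p : ℤ) ∣ (f.comp (X + C ζ₀)).coeff i) : sVal p f ζ₀ ≤ i :=
  Nat.sInf_le ⟨i, fun h => hi (h ▸ dvd_zero _),
    by rw [padicValInt.eq_zero_of_not_dvd hi, add_zero]⟩

theorem sVal_le_rootMultiplicity {p : ℕ} {f : ℤ[X]}
    (hf : f.map (Int.castRingHom (ZMod p)) ≠ 0) (ζ₀ : ℤ) :
    sVal p f ζ₀ ≤ (f.map (Int.castRingHom (ZMod p))).rootMultiplicity (ζ₀ : ZMod p) := by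
  rw [rootMultiplicity_eq_natTrailingDegree]
  apply sVal_le_of_not_dvd_coeff
  rw [← ZMod.intCast_zmod_eq_zero_iff_dvd, ← eq_intCast (Int.castRingHom (ZMod p)), ← coeff_map,
    map_comp_X_add_C]
  exact trailingCoeff_nonzero_iff_nonzero.mpr (comp_X_add_C_ne_zero_iff.mpr hf)

theorem sum_range_sVal_le_natDegree {p : ℕ} (hp : p.Prime) {f : ℤ[X]}
    (hf : f.map (Int.castRingHom (ZMod p)) ≠ 0) :
    ∑ z ∈ Finset.range p, sVal p f z ≤ (f.map (Int.castRingHom (ZMod p))).natDegree := by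
  have := Fact.mk hp
  set F := f.map (Int.castRingHom (ZMod p))
  have hinj : Set.InjOn (Nat.cast : ℕ → ZMod p) (Finset.range p) := fun a ha b hb hab => by
    rwa [ZMod.natCast_eq_natCast_iff', Nat.mod_eq_of_lt (Finset.mem_range.1 ha),
      Nat.mod_eq_of_lt (Finset.mem_range.1 hb)] at hab
  calc ∑ z ∈ Finset.range p, sVal p f z
      ≤ ∑ z ∈ Finset.range p, F.rootMultiplicity (z : ZMod p) :=
        Finset.sum_le_sum fun z _ => by
          simpa only [Int.cast_natCast] using sVal_le_rootMultiplicity hf z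
    _ = ∑ x ∈ (Finset.range p).image Nat.cast, F.rootMultiplicity x := by
        rw [Finset.sum_image hinj]
    _ ≤ F.natDegree := F.sum_rootMultiplicity_le_natDegree _

/-- The sum of `s(f,ζ₀)` over the degenerate roots `ζ₀ ∈ {0,…,p-1}` of the mod-`p`
reduction of `f` is at most the degree of that reduction. -/
theorem sum_sVal_le_degree (p : ℕ) (hp : p.Prime)
    (f : Polynomial ℤ) (hf : f.map (Int.castRingHom (ZMod p)) ≠ 0) :
    (∑ z ∈ (Finset.range p).filter
        (fun z : ℕ => (p : ℤ) ∣ f.eval (z : ℤ) ∧ (p : ℤ) ∣ f.derivative.eval (z : ℤ)),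
      sVal p f (z : ℤ))
      ≤ (f.map (Int.castRingHom (ZMod p))).natDegree :=
  (Finset.sum_le_sum_of_subset (Finset.filter_subset _ _)).trans (sum_range_sVal_le_natDegree hp hf)
end
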